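/- arXiv:1110.1322 — 2 statements merged into one kernel-verified Lean document; each statement's English description precedes it below -/
import Mathlib

section
/- Let D be a (v,k,λ)-difference set in ℤ/vℤ, let w be a positive divisor of v with w < v, and let x_i = #{d ∈ D : d ≡ i (mod w)}. Then ∑_{i=0}^{w-1} x_i² = (k - λ) + λv/w. -/
/-!
The sum `∑ xᵢ²` counts the pairs `(d₁, d₂) ∈ D × D` with `d₁ ≡ d₂ (mod w)`, i.e. with `d₁ - d₂` in
the kernel of `ℤ/vℤ → ℤ/wℤ`, a subgroup of order `v / w`. Sorting these pairs by their difference,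
the difference `0` contributes the `k` diagonal pairs and each of the other `v / w - 1` kernel
elements contributes `λ` pairs, so the sum is `k + λ (v / w - 1) = (k - λ) + λ v / w`.
-/

def IsDiffSet (v k l : ℕ) (D : Finset (ZMod v)) : Prop :=
  D.card = k ∧ ∀ d : ZMod v, d ≠ 0 →
    ((D ×ˢ D).filter (fun p => p.1 - p.2 = d)).card = l

open Finset

theorem Finset.sum_sq_card_fiberwise_eq_card_filter {α β : Type*} [DecidableEq β]
    (s : Finset α) (t : Finset β) (f : α → β) (hf : ∀ a ∈ s, f a ∈ t) :
    ∑ b ∈ t, #{a ∈ s | f a = b} ^ 2 = #{p ∈ s ×ˢ s | f p.1 = f p.2} := by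
  rw [card_eq_sum_card_fiberwise (f := fun p => f p.1) (t := t)
    fun p hp => hf _ (mem_product.1 (mem_filter.1 hp).1).1]
  refine sum_congr rfl fun b _ => ?_
  rw [sq, ← card_product, filter_filter]
  congr 1
  ext p
  simp only [mem_filter, mem_product]
  grind

theorem Finset.card_filter_sub_eq_zero {G : Type*} [AddGroup G] [DecidableEq G] (s : Finset G) :
    #{p ∈ s ×ˢ s | p.1 - p.2 = 0} = #s := by
  simp_rw [sub_eq_zero, ← diag_eq_filter, diag_card]

theorem Finset.card_filter_map_eq_map_eq_sum_ker {G H F : Type*} [AddGroup G] [Fintype G]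
    [DecidableEq G] [AddGroup H] [DecidableEq H] [FunLike F G H] [AddMonoidHomClass F G H]
    (φ : F) (s : Finset G) :
    #{p ∈ s ×ˢ s | φ p.1 = φ p.2} = ∑ d ∈ {d | φ d = 0}, #{p ∈ s ×ˢ s | p.1 - p.2 = d} := by
  have hker : ∀ a b : G, φ a = φ b ↔ φ (a - b) = 0 := by
    intro a b; rw [map_sub, sub_eq_zero]
  rw [card_eq_sum_card_fiberwise (f := fun p => p.1 - p.2) (t := {d | φ d = 0})
    fun p hp => by simpa [hker] using (mem_filter.1 hp).2]
  refine sum_congr rfl fun d hd => ?_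
  rw [filter_filter]
  congr 1
  ext p
  simp only [mem_filter, mem_univ, true_and] at hd
  simp only [mem_filter, hker]
  grind

theorem AddMonoidHom.card_filter_eq_zero_mul_card {G H : Type*} [AddGroup G] [Fintype G]
    [AddGroup H] [DecidableEq H] (φ : G →+ H) (hφ : Function.Surjective φ) :
    #{x | φ x = 0} * Nat.card H = Nat.card G := by
  rw [← φ.ker.card_mul_index, AddSubgroup.index_ker, φ.range_eq_top.2 hφ, AddSubgroup.card_top]
  simp [Nat.card_eq_fintype_card, Fintype.card_subtype, AddMonoidHom.mem_ker]

theorem ZMod.card_filter_castHom_eq_zero {v w : ℕ} [NeZero v] (h : w ∣ v) :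
    #{d : ZMod v | castHom h (ZMod w) d = 0} = v / w := by
  have hw : w ≠ 0 := by rintro rfl; exact NeZero.ne v (zero_dvd_iff.1 h)
  have := (castHom h (ZMod w)).toAddMonoidHom.card_filter_eq_zero_mul_card (castHom_surjective h)
  rw [Nat.card_zmod, Nat.card_zmod] at this
  exact Nat.eq_div_of_mul_eq_left hw this

theorem ZMod.val_castHom {v w : ℕ} [NeZero v] (h : w ∣ v) (a : ZMod v) :
    (castHom h (ZMod w) a).val = a.val % w := by
  rw [castHom_apply, ← natCast_val, val_natCast]

theorem IsDiffSet.sum_card_filter_sub_eq {v k l : ℕ} {D : Finset (ZMod v)}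
    (hD : IsDiffSet v k l D) {S : Finset (ZMod v)} (hS : 0 ∈ S) :
    ∑ d ∈ S, #{p ∈ D ×ˢ D | p.1 - p.2 = d} = k + l * (#S - 1) := by
  rw [← add_sum_erase _ _ hS, card_filter_sub_eq_zero, hD.1,
    sum_const_nat fun d hd => hD.2 d (ne_of_mem_erase hd), card_erase_of_mem hS, mul_comm]

theorem residue_classes_sum_sq (v k l w : ℕ) (hw : 0 < w) (hwv : w ∣ v) (hwlt : w < v)
    (D : Finset (ZMod v)) (hD : IsDiffSet v k l D) :
    ∑ i ∈ Finset.range w, ((D.filter (fun d => d.val % w = i)).card : ℤ) ^ 2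
      = ((k : ℤ) - l) + (l : ℤ) * v / w := by
  have : NeZero v := ⟨by omega⟩
  have : NeZero w := ⟨by omega⟩
  let φ := ZMod.castHom hwv (ZMod w)
  have hsame : #{p ∈ D ×ˢ D | p.1.val % w = p.2.val % w} = #{p ∈ D ×ˢ D | φ p.1 = φ p.2} := by
    simp_rw [← ZMod.val_castHom hwv, (ZMod.val_injective w).eq_iff]; rfl
  have hcount : ∑ i ∈ range w, #{d ∈ D | d.val % w = i} ^ 2 = k + l * (v / w - 1) := by
    rw [sum_sq_card_fiberwise_eq_card_filter _ _ _ fun a _ => mem_range.2 (Nat.mod_lt _ hw),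
      hsame, card_filter_map_eq_map_eq_sum_ker,
      hD.sum_card_filter_sub_eq (by simp), ← ZMod.card_filter_castHom_eq_zero hwv]
  have hvw : 1 ≤ v / w := Nat.div_pos hwlt.le hw
  have hdiv : (l : ℤ) * v / w = l * (v / w : ℕ) := by
    rw [Int.mul_ediv_assoc _ (Int.natCast_dvd_natCast.2 hwv), Int.natCast_ediv]
  have hrhs : (k : ℤ) - l + l * (v / w : ℕ) = (k + l * (v / w - 1) : ℕ) := by
    push_cast [Nat.cast_sub hvw]
    ring
  rw [hdiv, hrhs, ← hcount]
  push_cast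
  rfl
end

section
/- If a circulant matrix H of order n with entries ±1 satisfies H·Hᵀ = n·I and n > 1, then n ≡ 0 (mod 4). -/
/-!
Two rows of a ±1 matrix are orthogonal only if their length is even, so `n` is even. Every row
and column of a circulant matrix sums to `s = ∑ i, a i`, so the column sums of
`H * Hᵀ = n • 1` give `s ^ 2 = n`. As `n` is even, so is `s`, hence `4 ∣ s ^ 2 = n`.
-/

open Matrix

section Parity

variable {ι : Type*} [Fintype ι]

theorem even_card_of_dotProduct_eq_zero {u w : ι → ℤ} (hu : ∀ i, Odd (u i))
    (hw : ∀ i, Odd (w i)) (h : u ⬝ᵥ w = 0) : Even (Fintype.card ι) := by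
  have hmod : ((u ⬝ᵥ w : ℤ) : ZMod 2) = Fintype.card ι := by
    simp [dotProduct, ((hu _).mul (hw _)).intCast_zmod_two]
  rwa [h, Int.cast_zero, eq_comm, ZMod.natCast_eq_zero_iff_even] at hmod

variable {m : Type*} [DecidableEq m] [Nontrivial m]

theorem Matrix.even_card_of_mul_transpose_eq_smul_one {A : Matrix m ι ℤ}
    (hA : ∀ i j, Odd (A i j)) {c : ℤ} (h : A * Aᵀ = c • 1) : Even (Fintype.card ι) := by
  obtain ⟨i, j, hij⟩ := exists_pair_ne m
  refine even_card_of_dotProduct_eq_zero (hA i) (hA j) ?_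
  simpa [mul_apply, dotProduct, hij] using congrFun (congrFun h i) j

end Parity

section Circulant

variable {α n : Type*} [Fintype n] [AddGroup n]

theorem Matrix.circulant_mulVec_one [Semiring α] (v : n → α) :
    circulant v *ᵥ 1 = (∑ i, v i) • 1 := by
  ext i
  simpa [mulVec, dotProduct] using Fintype.sum_equiv (Equiv.subLeft i) _ _ (fun _ => rfl)

theorem Matrix.one_vecMul_circulant [Semiring α] (v : n → α) :
    1 ᵥ* circulant v = (∑ i, v i) • 1 := by
  ext j
  simpa [vecMul, dotProduct] using Fintype.sum_equiv (Equiv.subRight j) _ _ (fun _ => rfl)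

theorem Matrix.sum_sq_eq_of_circulant_mul_transpose_eq_smul_one [CommSemiring α]
    [Nonempty n] [DecidableEq n] {v : n → α} {c : α}
    (h : circulant v * (circulant v)ᵀ = c • 1) : (∑ i, v i) ^ 2 = c := by
  have hcol := congrArg (1 ᵥ* ·) h
  simp only [← vecMul_vecMul, one_vecMul_circulant, vecMul_transpose, mulVec_smul,
    circulant_mulVec_one, vecMul_smul, vecMul_one] at hcol
  simpa [sq] using congrFun hcol (Classical.arbitrary n)

end Circulant

theorem Int.four_dvd_of_sq_eq_of_even {s n : ℤ} (hs : s ^ 2 = n) (hn : Even n) : 4 ∣ n := by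
  obtain ⟨t, rfl⟩ := (Int.even_pow' two_ne_zero).mp (hs ▸ hn)
  exact ⟨t ^ 2, by rw [← hs]; ring⟩

theorem circulant_hadamard_order_div_four (n : ℕ) [NeZero n] (hn : 1 < n) (a : ZMod n → ℤ)
    (ha : ∀ i, a i = 1 ∨ a i = -1)
    (hH : Matrix.circulant a * (Matrix.circulant a)ᵀ
        = (n : ℤ) • (1 : Matrix (ZMod n) (ZMod n) ℤ)) :
    n % 4 = 0 := by
  have hodd : ∀ i j, Odd (circulant a i j) := fun i j => by
    rcases ha (i - j) with h | h <;> simp [circulant_apply, h]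
  have : Nontrivial (ZMod n) := ZMod.nontrivial_iff.mpr hn.ne'
  have heven : Even (n : ℤ) := by
    simpa using (even_card_of_mul_transpose_eq_smul_one hodd hH).natCast (α := ℤ)
  have h4 : (4 : ℤ) ∣ n :=
    Int.four_dvd_of_sq_eq_of_even (sum_sq_eq_of_circulant_mul_transpose_eq_smul_one hH) heven
  omega
end
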